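/- Let (X_j, Y_j), j ≥ 1, be i.i.d. pairs of real random variables with 0 < E|X₁|, E[X₁²] < ∞, and E[Y₁ | X₁] = β₁ X₁ almost surely, and suppose U₁ = Y₁ − β₁ X₁ satisfies Var(U₁) < ∞ and E|U₁ X₁| < ∞. Then the residual variance estimator n⁻¹ Σ_{j=1}ⁿ (Y_j − β̂₁ⁿ X_j)² converges in probability to Var(U₁) as n → ∞, where β̂₁ⁿ = (Σ_{j=1}ⁿ sign(X_j) Y_j) / (Σ_{j=1}ⁿ |X_j|) (defined arbitrarily on the event where the denominator vanishes). -/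

import Mathlib

open MeasureTheory ProbabilityTheory Filter Topology

/-!
Everything converges almost surely, by the strong law applied to functions of the i.i.d. pairs.
Pulling the `σ(X₁)`-measurable factor `sign X₁` out of `E[· | X₁]` gives
`E[sign(X₁) Y₁] = β₁ E|X₁|`, so the ratio estimator `β̂₁ⁿ` tends to `β₁`. Writing
`Y_j − β̂ X_j = U_j + (β₁ − β̂) X_j`, the residual mean square is the mean of `U_j²` plus
`2(β₁ − β̂)` times the mean of `U_j X_j` plus `(β₁ − β̂)²` times the mean of `X_j²`; the last two
means converge, so only the mean of `U_j²` survives, and it tends to `E[U₁²] = Var(U₁)` because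
`E[U₁] = 0`.
-/

namespace Real

@[fun_prop]
lemma measurable_sign : Measurable Real.sign :=
  Measurable.ite (measurableSet_lt measurable_id measurable_const) measurable_const
    (Measurable.ite (measurableSet_lt measurable_const measurable_id) measurable_const
      measurable_const)

lemma sign_mul_self_eq_abs (x : ℝ) : Real.sign x * x = |x| := by
  rcases lt_trichotomy x 0 with h | rfl | h
  · rw [sign_of_neg h, abs_of_neg h, neg_one_mul]
  · simp
  · rw [sign_of_pos h, abs_of_pos h, one_mul]

lemma abs_sign_le_one (x : ℝ) : |Real.sign x| ≤ 1 := by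
  rcases sign_apply_eq x with h | h | h <;> simp [h]

end Real

section Deterministic

open Finset

lemma tendsto_sum_div_sum_of_tendsto_mean {a b : ℕ → ℝ} {p q : ℝ}
    (ha : Tendsto (fun n : ℕ => (n : ℝ)⁻¹ * ∑ j ∈ range n, a j) atTop (𝓝 p))
    (hb : Tendsto (fun n : ℕ => (n : ℝ)⁻¹ * ∑ j ∈ range n, b j) atTop (𝓝 q)) (hq : q ≠ 0) :
    Tendsto (fun n : ℕ => (∑ j ∈ range n, a j) / ∑ j ∈ range n, b j) atTop (𝓝 (p / q)) := by
  refine (ha.div hb hq).congr' ?_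
  filter_upwards [eventually_ge_atTop 1] with n hn
  exact mul_div_mul_left _ _ (inv_ne_zero (Nat.cast_ne_zero.mpr (by omega)))

lemma mean_sq_sub_mul_eq (x y : ℕ → ℝ) (β b : ℝ) (n : ℕ) :
    (n : ℝ)⁻¹ * ∑ j ∈ range n, (y j - b * x j) ^ 2 =
      (n : ℝ)⁻¹ * ∑ j ∈ range n, (y j - β * x j) ^ 2
        + 2 * (β - b) * ((n : ℝ)⁻¹ * ∑ j ∈ range n, (y j - β * x j) * x j)
        + (β - b) ^ 2 * ((n : ℝ)⁻¹ * ∑ j ∈ range n, x j ^ 2) := by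
  have expand : ∑ j ∈ range n, (y j - b * x j) ^ 2 =
      ∑ j ∈ range n, ((y j - β * x j) ^ 2 + 2 * (β - b) * ((y j - β * x j) * x j)
        + (β - b) ^ 2 * x j ^ 2) :=
    sum_congr rfl fun j _ => by ring
  rw [expand, sum_add_distrib, sum_add_distrib, ← mul_sum, ← mul_sum]
  ring

lemma tendsto_mean_sq_sub_mul {x y b : ℕ → ℝ} {β s c d : ℝ} (hb : Tendsto b atTop (𝓝 β))
    (hs : Tendsto (fun n : ℕ => (n : ℝ)⁻¹ * ∑ j ∈ range n, (y j - β * x j) ^ 2) atTop (𝓝 s))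
    (hc : Tendsto (fun n : ℕ => (n : ℝ)⁻¹ * ∑ j ∈ range n, (y j - β * x j) * x j) atTop (𝓝 c))
    (hd : Tendsto (fun n : ℕ => (n : ℝ)⁻¹ * ∑ j ∈ range n, x j ^ 2) atTop (𝓝 d)) :
    Tendsto (fun n : ℕ => (n : ℝ)⁻¹ * ∑ j ∈ range n, (y j - b n * x j) ^ 2) atTop (𝓝 s) := by
  have hgap : Tendsto (fun n => β - b n) atTop (𝓝 0) := by
    simpa using (tendsto_const_nhds (x := β)).sub hb
  have hlim := (hs.add ((hgap.const_mul 2).mul hc)).add ((hgap.pow 2).mul hd)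
  rw [mul_zero, zero_mul, add_zero, zero_pow two_ne_zero, zero_mul, add_zero] at hlim
  exact hlim.congr fun n => (mean_sq_sub_mul_eq x y β (b n) n).symm

end Deterministic

lemma strong_law_ae_comp {Ω E : Type*} [MeasurableSpace Ω] [MeasurableSpace E] {μ : Measure Ω}
    {Z : ℕ → Ω → E} (hZ : ∀ j, Measurable (Z j)) (hindep : iIndepFun Z μ)
    (hident : ∀ j, μ.map (Z j) = μ.map (Z 0)) {g : E → ℝ} (hg : Measurable g)
    (hint : Integrable (fun ω => g (Z 0 ω)) μ) :
    ∀ᵐ ω ∂μ, Tendsto (fun n : ℕ => (n : ℝ)⁻¹ * ∑ j ∈ Finset.range n, g (Z j ω)) atTop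
      (𝓝 (∫ ω, g (Z 0 ω) ∂μ)) :=
  strong_law_ae (fun j ω => g (Z j ω)) hint
    (fun _ _ hij => (hindep.indepFun hij).comp hg hg)
    (fun j => IdentDistrib.comp ⟨(hZ j).aemeasurable, (hZ 0).aemeasurable, hident j⟩ hg)

lemma integral_comp_mul_eq_of_condExp_eq_const_mul {Ω : Type*} [MeasurableSpace Ω]
    {μ : Measure Ω} [IsFiniteMeasure μ] {X Y : Ω → ℝ} {β : ℝ} (hX : Measurable X)
    (hY : Integrable Y μ)
    (hcond : μ[Y | MeasurableSpace.comap X inferInstance] =ᵐ[μ] fun ω => β * X ω)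
    {φ : ℝ → ℝ} (hφ : Measurable φ) (hφY : Integrable (fun ω => φ (X ω) * Y ω) μ) :
    ∫ ω, φ (X ω) * Y ω ∂μ = β * ∫ ω, φ (X ω) * X ω ∂μ := by
  have hφX : StronglyMeasurable[MeasurableSpace.comap X inferInstance] (fun ω => φ (X ω)) :=
    (hφ.comp (comap_measurable X)).stronglyMeasurable
  calc ∫ ω, φ (X ω) * Y ω ∂μ
      = ∫ ω, (μ[(fun ω => φ (X ω)) * Y | MeasurableSpace.comap X inferInstance]) ω ∂μ :=
        (integral_condExp hX.comap_le).symm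
    _ = ∫ ω, φ (X ω) * (β * X ω) ∂μ := by
        refine integral_congr_ae ((condExp_mul_of_stronglyMeasurable_left hφX hφY hY).trans ?_)
        filter_upwards [hcond] with ω hω
        rw [Pi.mul_apply, hω]
    _ = β * ∫ ω, φ (X ω) * X ω ∂μ := by
        rw [← integral_const_mul]
        exact integral_congr_ae (ae_of_all _ fun ω => mul_left_comm _ _ _)

/-- For i.i.d. pairs with `0 < E|X₁|`, `E[X₁²] < ∞`,
`E[Y₁ | X₁] = β₁X₁` a.s., `Var(U₁) < ∞` and `E|U₁X₁| < ∞`, the residual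
variance estimator `n⁻¹ Σ (Y_j − β̂₁ⁿ X_j)²` converges in probability to
`Var(U₁)`. -/
theorem statement10
    {Ω : Type*} [MeasurableSpace Ω] (μ : Measure Ω) [IsProbabilityMeasure μ]
    (X Y : ℕ → Ω → ℝ)
    (hmeas : ∀ j, Measurable (fun ω => (X j ω, Y j ω)))
    -- i.i.d. pairs
    (hindep : iIndepFun (fun j ω => (X j ω, Y j ω)) μ)
    (hident : ∀ j, μ.map (fun ω => (X j ω, Y j ω)) = μ.map (fun ω => (X 0 ω, Y 0 ω)))
    (hYint : Integrable (Y 0) μ)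
    (hXpos : 0 < ∫ ω, |X 0 ω| ∂μ)
    (hXsq : MemLp (X 0) 2 μ)
    (β1 : ℝ)
    (hA2 : μ[Y 0 | MeasurableSpace.comap (X 0) inferInstance]
        =ᵐ[μ] fun ω => β1 * X 0 ω)
    (U : Ω → ℝ) (hU : U = fun ω => Y 0 ω - β1 * X 0 ω)
    (hUvar : MemLp U 2 μ)
    (hUX : Integrable (fun ω => U ω * X 0 ω) μ)
    (βhat : ℕ → Ω → ℝ)
    (hβhat : βhat = fun (n : ℕ) (ω : Ω) =>
      (∑ j ∈ Finset.range n, Real.sign (X j ω) * Y j ω) /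
        ∑ j ∈ Finset.range n, |X j ω|) :
    TendstoInMeasure μ
      (fun (n : ℕ) (ω : Ω) =>
        (n : ℝ)⁻¹ * ∑ j ∈ Finset.range n, (Y j ω - βhat n ω * X j ω) ^ 2)
      atTop (fun _ => ProbabilityTheory.variance U μ) := by
  subst hU hβhat
  have hXm (j : ℕ) : Measurable (X j) := measurable_fst.comp (hmeas j)
  have hYm (j : ℕ) : Measurable (Y j) := measurable_snd.comp (hmeas j)
  have hXint : Integrable (X 0) μ := hXsq.integrable one_le_two
  have hsY : Integrable (fun ω => Real.sign (X 0 ω) * Y 0 ω) μ :=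
    hYint.bdd_mul (Real.measurable_sign.comp (hXm 0)).aestronglyMeasurable
      (ae_of_all _ fun ω => Real.abs_sign_le_one (X 0 ω))
  have hEsY := integral_comp_mul_eq_of_condExp_eq_const_mul (hXm 0) hYint hA2
    Real.measurable_sign hsY
  have hEY := integral_comp_mul_eq_of_condExp_eq_const_mul (φ := fun _ => 1) (hXm 0) hYint hA2
    measurable_const (by simpa using hYint)
  simp only [Real.sign_mul_self_eq_abs, one_mul] at hEsY hEY
  have hVar := variance_of_integral_eq_zero (μ := μ) (X := fun ω => Y 0 ω - β1 * X 0 ω)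
    (by fun_prop)
    (by rw [integral_sub hYint (hXint.const_mul β1), integral_const_mul, hEY, sub_self])
  have slln := fun (g : ℝ × ℝ → ℝ) hg => strong_law_ae_comp hmeas hindep hident (g := g) hg
  refine tendstoInMeasure_of_tendsto_ae (fun n => by fun_prop) ?_
  filter_upwards [slln (fun p => Real.sign p.1 * p.2) (by fun_prop) hsY,
    slln (fun p => |p.1|) (by fun_prop) hXint.abs,
    slln (fun p => (p.2 - β1 * p.1) ^ 2) (by fun_prop) hUvar.integrable_sq,
    slln (fun p => (p.2 - β1 * p.1) * p.1) (by fun_prop) hUX,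
    slln (fun p => p.1 ^ 2) (by fun_prop) hXsq.integrable_sq] with ω hsYω habsω hU2ω hUXω hX2ω
  have hβ := tendsto_sum_div_sum_of_tendsto_mean hsYω habsω hXpos.ne'
  rw [hEsY, mul_div_cancel_right₀ _ hXpos.ne'] at hβ
  rw [hVar]
  exact tendsto_mean_sq_sub_mul hβ hU2ω hUXω hX2ω
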